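/- Combining the previous bounds: if f_θ is L-Lipschitz, e_0 = 0, f_θ(x_{n+1}) = f_θ(x̂_n), f(x_{n+1}) = f(x_n), ‖x̂_n − x_n‖ ≤ C(σ(n+1)−σ(n))^{p+1}, and σ(N) − σ(0) ≤ T, then sup_{0 ≤ n ≤ N} ‖f_θ(x_n) − f(x_n)‖ ≤ L·C·T·Δ^p where Δ = max_n(σ(n+1)−σ(n)). -/

import Mathlib

/-!
The error at `x (n + 1)` exceeds the error at `x n` by at most the Lipschitz image
`L * ‖xhat n - x n‖ ≤ L * C * h ^ (p + 1)` of the local solver error, where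
`h = σ (n + 1) - σ n`. Since `h ≤ Δ`, this is at most `L * C * Δ ^ p * h`, and the
increments `h` telescope to `σ n - σ 0 ≤ T`.
-/

lemma norm_sub_le_mul_norm_sub_add {E F : Type*} [SeminormedAddCommGroup E]
    [SeminormedAddCommGroup F] {g : E → F} {L : ℝ}
    (hg : ∀ a b, ‖g a - g b‖ ≤ L * ‖a - b‖)
    (a b : E) (v : F) : ‖g a - v‖ ≤ L * ‖a - b‖ + ‖g b - v‖ :=
  calc ‖g a - v‖ = ‖(g a - g b) + (g b - v)‖ := by rw [sub_add_sub_cancel]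
    _ ≤ ‖g a - g b‖ + ‖g b - v‖ := norm_add_le _ _
    _ ≤ L * ‖a - b‖ + ‖g b - v‖ := by gcongr; exact hg a b

lemma pow_succ_le_pow_mul {R : Type*} [Semiring R] [PartialOrder R] [IsOrderedRing R]
    {h Δ : R} (h0 : 0 ≤ h) (hΔ : h ≤ Δ) (p : ℕ) :
    h ^ (p + 1) ≤ Δ ^ p * h := by
  rw [pow_succ]
  exact mul_le_mul_of_nonneg_right (pow_le_pow_left₀ h0 hΔ p) h0

lemma le_mul_sub_of_succ_le_add_mul {R : Type*} [CommRing R] [PartialOrder R] [IsOrderedRing R]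
    {e σ : ℕ → R} {K : R} {N : ℕ} (h0 : e 0 ≤ 0)
    (hstep : ∀ n < N, e (n + 1) ≤ e n + K * (σ (n + 1) - σ n)) :
    ∀ n ≤ N, e n ≤ K * (σ n - σ 0) := by
  intro n hn
  induction n with
  | zero => simpa using h0
  | succ n ih => linear_combination ih (by omega) + hstep n hn

theorem stmt_10_general {d : ℕ} (fθ f : EuclideanSpace ℝ (Fin d) → EuclideanSpace ℝ (Fin d))
    (L C T : ℝ) (hL : 0 ≤ L) (hC : 0 ≤ C)
    (hlip : ∀ a b, ‖fθ a - fθ b‖ ≤ L * ‖a - b‖)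
    (N : ℕ) (hN : 0 < N) (x xhat : ℕ → EuclideanSpace ℝ (Fin d))
    (σ : ℕ → ℝ) (hσ : Monotone σ) (p : ℕ)
    (h0 : fθ (x 0) = f (x 0))
    (hnum : ∀ n < N, fθ (x (n + 1)) = fθ (xhat n))
    (hf : ∀ n < N, f (x (n + 1)) = f (x n))
    (herr : ∀ n < N, ‖xhat n - x n‖ ≤ C * (σ (n + 1) - σ n) ^ (p + 1))
    (hrange : σ N - σ 0 ≤ T)
    (Δ : ℝ)
    (hΔ : Δ = (Finset.range N).sup' (Finset.nonempty_range_iff.mpr hN.ne')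
      (fun n => σ (n + 1) - σ n)) :
    ∀ n ≤ N, ‖fθ (x n) - f (x n)‖ ≤ L * C * T * Δ ^ p := by
  have hstep_le : ∀ n < N, σ (n + 1) - σ n ≤ Δ := fun n hn =>
    hΔ ▸ Finset.le_sup' (fun n => σ (n + 1) - σ n) (Finset.mem_range.mpr hn)
  have hstep_nonneg : ∀ n, 0 ≤ σ (n + 1) - σ n := fun n => sub_nonneg.mpr (hσ n.le_succ)
  have hΔ0 : 0 ≤ Δ := (hstep_nonneg 0).trans (hstep_le 0 hN)
  have hacc := le_mul_sub_of_succ_le_add_mul (e := fun n => ‖fθ (x n) - f (x n)‖)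
    (σ := σ) (K := L * C * Δ ^ p) (N := N) (by simp [h0]) fun n hn => by
      have hlocal := pow_succ_le_pow_mul (hstep_nonneg n) (hstep_le n hn) p
      simp only [hnum n hn, hf n hn]
      calc ‖fθ (xhat n) - f (x n)‖ ≤ L * ‖xhat n - x n‖ + ‖fθ (x n) - f (x n)‖ :=
            norm_sub_le_mul_norm_sub_add hlip _ _ _
        _ ≤ L * (C * (Δ ^ p * (σ (n + 1) - σ n))) + ‖fθ (x n) - f (x n)‖ := by
            gcongr; exact (herr n hn).trans (mul_le_mul_of_nonneg_left hlocal hC)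
        _ = _ := by ring
  intro n hn
  calc ‖fθ (x n) - f (x n)‖ ≤ L * C * Δ ^ p * (σ n - σ 0) := hacc n hn
    _ ≤ L * C * Δ ^ p * T := by gcongr; linarith [hσ hn]
    _ = L * C * T * Δ ^ p := by ring

theorem stmt_10 {d : ℕ} (fθ f : EuclideanSpace ℝ (Fin d) → EuclideanSpace ℝ (Fin d))
    (L C T : ℝ) (hL : 0 ≤ L) (hC : 0 ≤ C) (hT : 0 ≤ T)
    (hlip : ∀ a b, ‖fθ a - fθ b‖ ≤ L * ‖a - b‖)
    (N : ℕ) (hN : 0 < N) (x xhat : ℕ → EuclideanSpace ℝ (Fin d))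
    (σ : ℕ → ℝ) (hσ : Monotone σ) (p : ℕ) (hp : 1 ≤ p)
    (h0 : fθ (x 0) = f (x 0))
    (hnum : ∀ n < N, fθ (x (n + 1)) = fθ (xhat n))
    (hf : ∀ n < N, f (x (n + 1)) = f (x n))
    (herr : ∀ n < N, ‖xhat n - x n‖ ≤ C * (σ (n + 1) - σ n) ^ (p + 1))
    (hrange : σ N - σ 0 ≤ T)
    (Δ : ℝ)
    (hΔ : Δ = (Finset.range N).sup' (Finset.nonempty_range_iff.mpr hN.ne')
      (fun n => σ (n + 1) - σ n)) :
    ∀ n ≤ N, ‖fθ (x n) - f (x n)‖ ≤ L * C * T * Δ ^ p :=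
  stmt_10_general fθ f L C T hL hC hlip N hN x xhat σ hσ p h0 hnum hf herr hrange Δ hΔ
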